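/- Let G be a group, K a subgroup with |x^G| ≤ n for all x ∈ K, and H = ⟨K^G⟩ the normal closure of K. Let X = ⋃_{g∈G} K^g and let m be the maximum of the indices [H : C_H(x)] over x ∈ K. Then for every x ∈ X, the subgroup [H, x] generated by commutators [h, x] with h ∈ H has finite order bounded in terms of m. -/

import Mathlib

/-!
Since `X` generates `H`, the identity `⁅a * b, x⁆ = a ⁅b, x⁆ a⁻¹ ⁅a, x⁆` shows that `[H, x]`
is generated by the conjugates `h ⁅y, x⁆ h⁻¹ = ⁅h * y, x⁆ ⁅h, x⁆⁻¹` with `h ∈ H`, `y ∈ X`,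
a set normalized by `H`. As `⁅h, x⁆` only depends on the coset `h C_H(x)`, there are at most
`m²` of them. Each `⁅y, x⁆` has order dividing `(m²)!`: the center of `R = ⟨x, y⟩` contains
`C_R(x) ∩ C_R(y)`, of index at most `m²`, and the transfer `R → Z(R)`, `g ↦ g ^ [R : Z(R)]`,
kills commutators. Dietzmann's lemma (a finite normal set of elements of bounded order
generates a finite subgroup) then bounds `|[H, x]|` in terms of `m`.
-/

open Subgroup
open scoped commutatorElement Nat Pointwise

lemma List.prod_mem_pow_length {M : Type*} [Monoid M] {s : Set M} :
    ∀ l : List M, (∀ a ∈ l, a ∈ s) → l.prod ∈ s ^ l.length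
  | [], _ => by simp
  | a :: l, hl => by
    rw [List.prod_cons, List.length_cons, pow_succ']
    exact Set.mul_mem_mul (hl a List.mem_cons_self)
      (List.prod_mem_pow_length l fun b hb => hl b (List.mem_cons_of_mem a hb))

lemma List.exists_le_count_of_mul_lt_length {α : Type*} [DecidableEq α] {V : Set α}
    (hVfin : V.Finite) {E : ℕ} (l : List α) (hl : ∀ a ∈ l, a ∈ V)
    (hlen : Nat.card V * (E - 1) < l.length) : ∃ v ∈ V, E ≤ l.count v := by
  by_contra! hcount
  have hsub : l.toFinset ⊆ hVfin.toFinset := fun a ha => by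
    simpa using hl a (List.mem_toFinset.mp ha)
  have : l.length ≤ Nat.card V * (E - 1) := calc
    l.length = ∑ v ∈ l.toFinset, l.count v := (List.sum_toFinset_count_eq_length l).symm
    _ ≤ l.toFinset.card * (E - 1) := by
      simpa using Finset.sum_le_card_nsmul _ _ _ fun v hv =>
        Nat.le_sub_one_of_lt (hcount v (hl v (List.mem_toFinset.mp hv)))
    _ ≤ Nat.card V * (E - 1) := by
      rw [Nat.card_eq_card_finite_toFinset hVfin]; gcongr
  omega

section Dietzmann

variable {G : Type*} [Group G] {V : Set G}
  (hV : ∀ g ∈ closure V, ∀ w ∈ V, g * w * g⁻¹ ∈ V)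
include hV

lemma exists_prod_eq_pow_count_mul [DecidableEq G] {v : G} (hv : v ∈ V) :
    ∀ l : List G, (∀ a ∈ l, a ∈ V) → ∃ l' : List G, (∀ a ∈ l', a ∈ V) ∧
      l'.length = l.length - l.count v ∧ l.prod = v ^ l.count v * l'.prod
  | [], _ => ⟨[], by simp⟩
  | a :: l, hl => by
    obtain ⟨l', hl'V, hl'len, hl'prod⟩ :=
      exists_prod_eq_pow_count_mul hv l fun b hb => hl b (List.mem_cons_of_mem a hb)
    have hcount := l.count_le_length (a := v)
    by_cases hav : a = v
    · subst hav
      refine ⟨l', hl'V, ?_, ?_⟩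
      · simp only [List.count_cons_self, List.length_cons]; omega
      · rw [List.prod_cons, List.count_cons_self, hl'prod, pow_succ', mul_assoc]
    · have hconj : (v ^ l.count v)⁻¹ * a * v ^ l.count v ∈ V := by
        simpa using hV _ (inv_mem (pow_mem (subset_closure hv) _)) a (hl a List.mem_cons_self)
      refine ⟨(v ^ l.count v)⁻¹ * a * v ^ l.count v :: l', ?_, ?_, ?_⟩
      · simpa [hconj] using hl'V
      · simp only [List.length_cons, List.count_cons_of_ne hav]; omega
      · rw [List.prod_cons, List.prod_cons, List.count_cons_of_ne hav, hl'prod]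
        simp only [mul_assoc, mul_inv_cancel_left]

lemma exists_list_prod_eq_of_length_le (hVfin : V.Finite) {E : ℕ} (hE : 0 < E)
    (hpow : ∀ v ∈ V, v ^ E = 1) (l : List G) (hl : ∀ a ∈ l, a ∈ V) :
    ∃ l' : List G, (∀ a ∈ l', a ∈ V) ∧ l'.length ≤ Nat.card V * (E - 1) ∧ l'.prod = l.prod := by
  classical
  induction hn : l.length using Nat.strong_induction_on generalizing l with
  | _ n ih =>
  by_cases hlen : n ≤ Nat.card V * (E - 1)
  · exact ⟨l, hl, hn ▸ hlen, rfl⟩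
  obtain ⟨v, hv, hEv⟩ := l.exists_le_count_of_mul_lt_length hVfin (E := E) hl (by omega)
  obtain ⟨l', hl'V, hl'len, hl'prod⟩ := exists_prod_eq_pow_count_mul hV hv l hl
  have hshort : (List.replicate (l.count v - E) v ++ l').prod = l.prod := by
    rw [List.prod_append, List.prod_replicate, hl'prod, ← Nat.sub_add_cancel hEv, pow_add,
      hpow v hv, mul_one, Nat.add_sub_cancel]
  have hshortV : ∀ a ∈ List.replicate (l.count v - E) v ++ l', a ∈ V := by
    simp only [List.mem_append, List.mem_replicate]
    rintro a (⟨-, rfl⟩ | ha)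
    exacts [hv, hl'V a ha]
  have hshortlen : (List.replicate (l.count v - E) v ++ l').length < n := by
    have := l.count_le_length (a := v)
    simp only [List.length_append, List.length_replicate, hl'len]
    omega
  obtain ⟨l'', hl''V, hl''len, hl''prod⟩ := ih _ hshortlen _ hshortV rfl
  exact ⟨l'', hl''V, hl''len, hl''prod.trans hshort⟩

/-- Dietzmann's lemma: every element of `closure V` is a word in `V` in which no letter occurs
`E` times. -/
theorem finite_closure_of_conj_mem (hVfin : V.Finite) {E : ℕ} (hE : 0 < E)
    (hpow : ∀ v ∈ V, v ^ E = 1) :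
    Finite (closure V) ∧ Nat.card (closure V) ≤ (Nat.card V + 1) ^ (Nat.card V * (E - 1)) := by
  classical
  set L := Nat.card V * (E - 1)
  set S : Finset G := insert 1 hVfin.toFinset
  have hsub : (closure V : Set G) ⊆ ↑(S ^ L) := by
    intro g hg
    have hfin (v) (hv : v ∈ V) : IsOfFinOrder v :=
      isOfFinOrder_iff_pow_eq_one.mpr ⟨E, hE, hpow v hv⟩
    rw [SetLike.mem_coe, ← mem_toSubmonoid, closure_toSubmonoid_of_isOfFinOrder hfin] at hg
    obtain ⟨l, hl, rfl⟩ := Submonoid.exists_list_of_mem_closure hg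
    obtain ⟨l', hl'V, hl'len, hl'prod⟩ := exists_list_prod_eq_of_length_le hV hVfin hE hpow l hl
    rw [← hl'prod, Finset.coe_pow]
    refine Set.pow_subset_pow_right (by simp [S]) hl'len ?_
    exact List.prod_mem_pow_length l' fun a ha => by simp [S, hl'V a ha]
  refine ⟨(S ^ L).finite_toSet.subset hsub, ?_⟩
  calc Nat.card (closure V) ≤ (S ^ L).card :=
        (Nat.card_mono (Finset.finite_toSet _) hsub).trans_eq (Nat.card_eq_finsetCard _)
    _ ≤ S.card ^ L := Finset.card_pow_le
    _ ≤ (Nat.card V + 1) ^ L := by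
        gcongr
        rw [Nat.card_eq_card_finite_toFinset hVfin]
        exact Finset.card_insert_le _ _

end Dietzmann

section CommutatorOrder

variable {G : Type*} [Group G]

/-- The transfer `g ↦ g ^ [G : Z(G)]` is a homomorphism into an abelian group. -/
lemma commutatorElement_pow_index_center [(center G).FiniteIndex] (a b : G) :
    ⁅a, b⁆ ^ (center G).index = 1 := by
  rw [← MonoidHom.transferCenterPow_apply, map_commutatorElement,
    commutatorElement_eq_one_iff_mul_comm.mpr (IsMulCommutative.is_comm.comm _ _),
    OneMemClass.coe_one]

lemma commutatorElement_pow_factorial_eq_one {H : Subgroup G} {m : ℕ} {x y : G}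
    (hx : x ∈ H) (hy : y ∈ H)
    (hxm : (centralizer {x}).relIndex H ≠ 0 ∧ (centralizer {x}).relIndex H ≤ m)
    (hym : (centralizer {y}).relIndex H ≠ 0 ∧ (centralizer {y}).relIndex H ≤ m) :
    ⁅x, y⁆ ^ (m * m)! = 1 := by
  set R := closure {x, y}
  have hxR : x ∈ R := subset_closure (by simp)
  have hyR : y ∈ R := subset_closure (by simp)
  have hRH : R ≤ H := (closure_le H).mpr (Set.insert_subset hx (Set.singleton_subset_iff.mpr hy))
  set Z := centralizer {x} ⊓ centralizer {y}
  have hZH : Z.relIndex H ≠ 0 := relIndex_inf_ne_zero hxm.1 hym.1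
  have hZR : Z.relIndex R ≠ 0 := fun h => hZH (relIndex_eq_zero_of_le_right hRH h)
  have hZRm : Z.relIndex R ≤ m * m :=
    (relIndex_le_of_le_right hRH hZH).trans (relIndex_inf_le.trans (Nat.mul_le_mul hxm.2 hym.2))
  have hcenter : Z.subgroupOf R ≤ center R := by
    intro z hz
    have hzR : (z : G) ∈ centralizer (R : Set G) := by
      rw [centralizer_closure, mem_centralizer_iff]
      rw [mem_subgroupOf, mem_inf, mem_centralizer_singleton_iff,
        mem_centralizer_singleton_iff] at hz
      rintro g (rfl | rfl)
      exacts [hz.1.symm, hz.2.symm]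
    exact mem_center_iff.mpr fun r => Subtype.ext ((mem_centralizer_iff.mp hzR) r r.2)
  have hdvd : (center R).index ∣ Z.relIndex R := index_dvd_of_le hcenter
  have hcenter0 : (center R).index ≠ 0 := fun h => hZR (Nat.eq_zero_of_zero_dvd (h ▸ hdvd))
  have : (center R).FiniteIndex := ⟨hcenter0⟩
  obtain ⟨d, hd⟩ := Nat.dvd_factorial (Nat.pos_of_ne_zero hcenter0)
    ((Nat.le_of_dvd (Nat.pos_of_ne_zero hZR) hdvd).trans hZRm)
  have hpow := congrArg R.subtype (commutatorElement_pow_index_center (⟨x, hxR⟩ : R) ⟨y, hyR⟩)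
  simp only [map_pow, map_commutatorElement, map_one, coe_subtype] at hpow
  rw [hd, pow_mul, hpow, one_pow]

end CommutatorOrder

section CommutatorsWith

variable {G : Type*} [Group G]

lemma conjAct_smul_centralizer_singleton (g k : G) :
    ConjAct.toConjAct g • centralizer {k} = centralizer {g * k * g⁻¹} := by
  ext z
  rw [mem_pointwise_smul_iff_inv_smul_mem, ← ConjAct.toConjAct_inv, ConjAct.toConjAct_smul,
    mem_centralizer_singleton_iff, mem_centralizer_singleton_iff, inv_inv]
  constructor <;> intro h
  · calc z * (g * k * g⁻¹) = g * ((g⁻¹ * z * g) * k) * g⁻¹ := by group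
      _ = g * k * g⁻¹ * z := by rw [h]; group
  · calc g⁻¹ * z * g * k = g⁻¹ * (z * (g * k * g⁻¹)) * g := by group
      _ = k * (g⁻¹ * z * g) := by rw [h]; group

lemma relIndex_centralizer_conj (H : Subgroup G) [H.Normal] (g k : G) :
    (centralizer {g * k * g⁻¹}).relIndex H = (centralizer {k}).relIndex H := by
  have hH : ConjAct.toConjAct g • H = H :=
    conjAct_pointwise_smul_eq_self (by simp [normalizer_eq_top])
  rw [← conjAct_smul_centralizer_singleton,
    ← relIndex_pointwise_smul (ConjAct.toConjAct g) (centralizer {k}) H, hH]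

lemma conj_mem_closure_of_conj_mem {s : Set G} {g : G} (hg : ∀ v ∈ s, g * v * g⁻¹ ∈ s) {w : G}
    (hw : w ∈ closure s) : g * w * g⁻¹ ∈ closure s := by
  have : (closure s).map (MulAut.conj g).toMonoidHom ≤ closure s := by
    rw [MonoidHom.map_closure, closure_le]
    rintro _ ⟨v, hv, rfl⟩
    exact subset_closure (hg v hv)
  exact this ⟨w, hw, rfl⟩

lemma commutatorElement_mul_eq_of_mem_centralizer {h c x : G} (hc : c ∈ centralizer {x}) :
    ⁅h * c, x⁆ = ⁅h, x⁆ := by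
  rw [mem_centralizer_singleton_iff] at hc
  calc ⁅h * c, x⁆ = h * (c * x) * c⁻¹ * h⁻¹ * x⁻¹ := by group
    _ = ⁅h, x⁆ := by rw [hc]; group

def commutatorsWith (H : Subgroup G) (x : G) : Set G := {z | ∃ h ∈ H, z = ⁅h, x⁆}

lemma commutatorsWith_finite_and_natCard_le (H : Subgroup G) (x : G)
    (hx : (centralizer {x}).relIndex H ≠ 0) :
    (commutatorsWith H x).Finite ∧
      Nat.card (commutatorsWith H x) ≤ (centralizer {x}).relIndex H := by
  have : Finite (H ⧸ (centralizer {x}).subgroupOf H) :=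
    Nat.finite_of_card_ne_zero (by rwa [← index_eq_card])
  let f : H ⧸ (centralizer {x}).subgroupOf H → G := fun q =>
    q.liftOn' (fun h => ⁅(h : G), x⁆) fun h₁ h₂ hr => by
      rw [QuotientGroup.leftRel_apply, mem_subgroupOf] at hr
      simpa using (commutatorElement_mul_eq_of_mem_centralizer (h := (h₁ : G)) hr).symm
  have hsub : commutatorsWith H x ⊆ Set.range f := by
    rintro _ ⟨h, hh, rfl⟩
    exact ⟨QuotientGroup.mk ⟨h, hh⟩, rfl⟩
  refine ⟨(Set.finite_range f).subset hsub, ?_⟩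
  calc Nat.card (commutatorsWith H x) ≤ Nat.card (Set.range f) :=
        Nat.card_mono (Set.finite_range f) hsub
    _ ≤ Nat.card (H ⧸ (centralizer {x}).subgroupOf H) := Finite.card_range_le f
    _ = (centralizer {x}).relIndex H := (index_eq_card _).symm

def conjCommutators (H : Subgroup G) (X : Set G) (x : G) : Set G :=
  {w | ∃ h ∈ H, ∃ y ∈ X, w = h * ⁅y, x⁆ * h⁻¹}

variable {H : Subgroup G} {X : Set G} {x : G}

lemma conj_commutatorElement_eq (h y x : G) : h * ⁅y, x⁆ * h⁻¹ = ⁅h * y, x⁆ * ⁅h, x⁆⁻¹ :=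
  eq_mul_inv_of_mul_eq (commutatorElement_mul_left_eq_conj_mul h y x).symm

lemma conjCommutators_subset_mul_inv (hXH : X ⊆ H) :
    conjCommutators H X x ⊆ commutatorsWith H x * (commutatorsWith H x)⁻¹ := by
  rintro _ ⟨h, hh, y, hy, rfl⟩
  rw [conj_commutatorElement_eq]
  exact Set.mul_mem_mul ⟨h * y, mul_mem hh (hXH hy), rfl⟩ (Set.inv_mem_inv.mpr ⟨h, hh, rfl⟩)

lemma conjCommutators_finite_and_natCard_le (hXH : X ⊆ H) {m : ℕ}
    (hx : (centralizer {x}).relIndex H ≠ 0 ∧ (centralizer {x}).relIndex H ≤ m) :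
    (conjCommutators H X x).Finite ∧ Nat.card (conjCommutators H X x) ≤ m * m := by
  obtain ⟨hCfin, hCcard⟩ := commutatorsWith_finite_and_natCard_le H x hx.1
  have hCm : Nat.card (commutatorsWith H x) ≤ m := hCcard.trans hx.2
  have hCCfin := hCfin.mul hCfin.inv
  refine ⟨hCCfin.subset (conjCommutators_subset_mul_inv hXH), ?_⟩
  calc Nat.card (conjCommutators H X x)
      ≤ Nat.card ↥(commutatorsWith H x * (commutatorsWith H x)⁻¹) :=
        Nat.card_mono hCCfin (conjCommutators_subset_mul_inv hXH)
    _ ≤ Nat.card (commutatorsWith H x) * Nat.card ↥(commutatorsWith H x)⁻¹ := Set.natCard_mul_le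
    _ ≤ m * m := by rw [Set.natCard_inv]; exact Nat.mul_le_mul hCm hCm

lemma conjCommutators_subset (hXH : X ⊆ H) (hx : x ∈ H) : conjCommutators H X x ⊆ H := by
  rintro _ ⟨h, hh, y, hy, rfl⟩
  have hyH := hXH hy
  rw [commutatorElement_def]
  exact mul_mem (mul_mem hh (mul_mem (mul_mem (mul_mem hyH hx) (inv_mem hyH)) (inv_mem hx)))
    (inv_mem hh)

lemma conj_mem_conjCommutators {g : G} (hg : g ∈ H) :
    ∀ v ∈ conjCommutators H X x, g * v * g⁻¹ ∈ conjCommutators H X x := by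
  rintro _ ⟨h, hh, y, hy, rfl⟩
  exact ⟨g * h, mul_mem hg hh, y, hy, by group⟩

lemma closure_conjCommutators (hXH : closure X = H) :
    closure (conjCommutators H X x) = closure (commutatorsWith H x) := by
  have hXsub : X ⊆ H := hXH ▸ subset_closure
  apply le_antisymm
  · rw [closure_le]
    rintro _ ⟨h, hh, y, hy, rfl⟩
    rw [conj_commutatorElement_eq]
    exact mul_mem (subset_closure ⟨h * y, mul_mem hh (hXsub hy), rfl⟩)
      (inv_mem (subset_closure ⟨h, hh, rfl⟩))
  · rw [closure_le]
    rintro _ ⟨h, hh, rfl⟩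
    rw [← hXH] at hh
    induction hh using closure_induction with
    | mem y hy => exact subset_closure ⟨1, one_mem H, y, hy, by group⟩
    | one => rw [commutatorElement_one_left]; exact one_mem _
    | mul a b ha _ iha ihb =>
      rw [commutatorElement_mul_left_eq_conj_mul]
      exact mul_mem (conj_mem_closure_of_conj_mem (conj_mem_conjCommutators (hXH ▸ ha)) ihb) iha
    | inv a ha iha =>
      have : ⁅a⁻¹, x⁆ = a⁻¹ * ⁅a, x⁆⁻¹ * a⁻¹⁻¹ := by
        rw [commutatorElement_inv_left, commutatorElement_inv, inv_inv]
      rw [this]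
      exact conj_mem_closure_of_conj_mem (conj_mem_conjCommutators (inv_mem (hXH ▸ ha)))
        (inv_mem iha)

theorem finite_closure_commutatorsWith {m : ℕ} (hXH : closure X = H)
    (hX : ∀ y ∈ X, (centralizer {y}).relIndex H ≠ 0 ∧ (centralizer {y}).relIndex H ≤ m)
    (hx : x ∈ X) :
    Finite (closure (commutatorsWith H x)) ∧
      Nat.card (closure (commutatorsWith H x)) ≤ (m * m + 1) ^ (m * m * ((m * m)! - 1)) := by
  have hXsub : X ⊆ H := hXH ▸ subset_closure
  obtain ⟨hVfin, hVcard⟩ := conjCommutators_finite_and_natCard_le hXsub (hX x hx)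
  have hVpow : ∀ v ∈ conjCommutators H X x, v ^ (m * m)! = 1 := by
    rintro _ ⟨h, hh, y, hy, rfl⟩
    rw [conj_pow,
      commutatorElement_pow_factorial_eq_one (hXsub hy) (hXsub hx) (hX y hy) (hX x hx),
      mul_one, mul_inv_cancel]
  have hVconj : ∀ g ∈ closure (conjCommutators H X x), ∀ v ∈ conjCommutators H X x,
      g * v * g⁻¹ ∈ conjCommutators H X x := fun g hg =>
    conj_mem_conjCommutators ((closure_le H).mpr (conjCommutators_subset hXsub (hXsub hx)) hg)
  rw [← closure_conjCommutators hXH]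
  obtain ⟨hfin, hcard⟩ :=
    finite_closure_of_conj_mem hVconj hVfin (Nat.factorial_pos _) hVpow
  refine ⟨hfin, hcard.trans ?_⟩
  gcongr
  omega

end CommutatorsWith

lemma Group.setOf_inv_mul_mul_eq_conjugatesOfSet {G : Type*} [Group G] (s : Set G) :
    {x | ∃ g : G, ∃ k ∈ s, x = g⁻¹ * k * g} = Group.conjugatesOfSet s := by
  ext y
  simp only [Set.mem_ofPred_eq, Group.mem_conjugatesOfSet_iff, isConj_iff]
  constructor
  · rintro ⟨g, k, hk, rfl⟩
    exact ⟨k, hk, g⁻¹, by group⟩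
  · rintro ⟨k, hk, g, rfl⟩
    exact ⟨g⁻¹, k, hk, by group⟩

/-- Under Hypothesis 2.3: if `|x^G| ≤ n` for all `x ∈ K`, `H = ⟨K^G⟩`,
`X` is the set of all conjugates of elements of `K`, and `m` is the maximum of the
indices `[H : C_H(x)]` for `x ∈ K`, then for any `x ∈ X` the subgroup `[H, x]`
has finite `m`-bounded order. -/
theorem stmt_2 :
    ∃ f : ℕ → ℕ, ∀ n : ℕ, ∀ (G : Type) [Group G] (K : Subgroup G),
      (∀ x ∈ K, (conjugatesOf x).Finite ∧ Nat.card (conjugatesOf x) ≤ n) →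
      ∀ (H : Subgroup G), H = Subgroup.normalClosure (K : Set G) →
      ∀ (X : Set G), X = {x | ∃ g : G, ∃ k ∈ K, x = g⁻¹ * k * g} →
      ∀ m : ℕ,
        (∀ x ∈ K, 0 < (Subgroup.centralizer {x}).relIndex H ∧
          (Subgroup.centralizer {x}).relIndex H ≤ m) →
        (∃ a ∈ K, (Subgroup.centralizer {a}).relIndex H = m) →
      ∀ x ∈ X,
        Finite (Subgroup.closure {z | ∃ h ∈ H, z = ⁅h, x⁆}) ∧
        Nat.card (Subgroup.closure {z | ∃ h ∈ H, z = ⁅h, x⁆}) ≤ f m := by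
  refine ⟨fun m => (m * m + 1) ^ (m * m * ((m * m)! - 1)), ?_⟩
  rintro n G _ K - H rfl X rfl m hm - x hx
  refine finite_closure_commutatorsWith ?_ (fun y hy => ?_) hx
  · exact congrArg Subgroup.closure (Group.setOf_inv_mul_mul_eq_conjugatesOfSet (K : Set G))
  · obtain ⟨g, k, hk, rfl⟩ := hy
    have hconj := relIndex_centralizer_conj (normalClosure (K : Set G)) g⁻¹ k
    rw [inv_inv] at hconj
    rw [hconj]
    exact ⟨(hm k hk).1.ne', (hm k hk).2⟩
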